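/- Let n ≥ 2 be an integer and let H > (n-1)/n. Then there exists a unique a > 0 with M_{H,0}(a) = 0; moreover M_{H,0}(t) > 0 for 0 < t < a, M_{H,0}(t) < 0 for t > a, and the function Q_{H,0} is integrable on the interval (0, a) (the improper integral converges at both endpoints). -/

import Mathlib

open Filter Topology

/-- `Ifun m t = ∫₀ᵗ sinh^m(r) dr`. -/
noncomputable def Ifun (m : ℕ) (t : ℝ) : ℝ := ∫ r in (0:ℝ)..t, Real.sinh r ^ m

/-- `Mfun n H d t = sinh^{n-1}(t) − nH·I_{n-1}(t) − d`. -/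
noncomputable def Mfun (n : ℕ) (H d t : ℝ) : ℝ :=
  Real.sinh t ^ (n - 1) - n * H * Ifun (n - 1) t - d

/-- `Pfun n H d t = sinh^{n-1}(t) + nH·I_{n-1}(t) + d`. -/
noncomputable def Pfun (n : ℕ) (H d t : ℝ) : ℝ :=
  Real.sinh t ^ (n - 1) + n * H * Ifun (n - 1) t + d

/-- `Qfun n H d t = (nH·I_{n-1}(t) + d)/√(M·P)`. -/
noncomputable def Qfun (n : ℕ) (H d t : ℝ) : ℝ :=
  (n * H * Ifun (n - 1) t + d) / Real.sqrt (Mfun n H d t * Pfun n H d t)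

/-! Write `c = nH > n - 1`. Then `M' = sinh^{n-2} · G` with `G = (n - 1) cosh - c sinh`, and
`G' ≤ -(c - (n - 1)) < 0`, so `G` has a single zero `t₀ > 0`. Hence `M` increases from `M(0) = 0`
on `[0, t₀]` and afterwards decreases at least linearly to `-∞`, which gives the unique root `a`.
For integrability: near `0`, `I_{n-1}(t) ≤ t sinh^{n-1} t` makes `|Q| ≤ 1`; near `a`, the linear
decay gives `M(t) ≥ δ (a - t)`, so `Q = O((a - t)^{-1/2})`; in between `Q` is continuous. -/

open Real Set MeasureTheory

section Calculus

variable {f f' : ℝ → ℝ}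

theorem sub_le_mul_sub_of_hasDerivAt_le {b C : ℝ} (hf : ∀ t, HasDerivAt f (f' t) t)
    (hf' : ∀ t, b ≤ t → f' t ≤ C) {s t : ℝ} (hbs : b ≤ s) (hst : s ≤ t) :
    f t - f s ≤ C * (t - s) :=
  (convex_Ici b).image_sub_le_mul_sub_of_deriv_le
    (fun x _ => (hf x).continuousAt.continuousWithinAt)
    (fun x _ => (hf x).differentiableAt.differentiableWithinAt)
    (fun x hx => (hf x).deriv ▸ hf' x (interior_subset hx)) s hbs t (hbs.trans hst) hst

theorem tendsto_atBot_of_hasDerivAt_le_neg {b δ : ℝ} (hδ : 0 < δ)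
    (hf : ∀ t, HasDerivAt f (f' t) t) (hf' : ∀ t, b ≤ t → f' t ≤ -δ) :
    Tendsto f atTop atBot := by
  have hlin : Tendsto (fun t => f b + -δ * (t + -b)) atTop atBot :=
    tendsto_atBot_add_const_left _ _ <|
      (tendsto_atTop_add_const_right _ _ tendsto_id).const_mul_atTop_of_neg (neg_neg_of_pos hδ)
  refine tendsto_atBot_mono' atTop ?_ hlin
  filter_upwards [eventually_ge_atTop b] with t ht
  linarith [sub_le_mul_sub_of_hasDerivAt_le hf hf' le_rfl ht]

theorem exists_pos_root_of_hasDerivAt {t₀ : ℝ} (hf : ∀ t, HasDerivAt f (f' t) t) (hf0 : f 0 = 0)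
    (ht₀ : 0 < t₀) (hpos : ∀ t ∈ Ioo 0 t₀, 0 < f' t) (hneg : ∀ t, t₀ < t → f' t < 0)
    (hbot : Tendsto f atTop atBot) :
    ∃ a, t₀ < a ∧ f a = 0 ∧ (∀ t, 0 < t → t < a → 0 < f t) ∧ ∀ t, a < t → f t < 0 := by
  have hcont : Continuous f := continuous_iff_continuousAt.2 fun t => (hf t).continuousAt
  have hmono : StrictMonoOn f (Icc 0 t₀) :=
    strictMonoOn_of_hasDerivWithinAt_pos (convex_Icc 0 t₀) hcont.continuousOn
      (fun t _ => (hf t).hasDerivWithinAt) (by rwa [interior_Icc])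
  have hanti : StrictAntiOn f (Ici t₀) :=
    strictAntiOn_of_hasDerivWithinAt_neg (convex_Ici t₀) hcont.continuousOn
      (fun t _ => (hf t).hasDerivWithinAt) (by rwa [interior_Ici])
  have hft₀ : 0 < f t₀ := hf0 ▸ hmono ⟨le_rfl, ht₀.le⟩ ⟨ht₀.le, le_rfl⟩ ht₀
  obtain ⟨a, hat₀, hfa⟩ := intermediate_value_Ici' hcont.continuousOn hbot hft₀.le
  have ht₀a : t₀ < a := lt_of_le_of_ne hat₀ (by rintro rfl; linarith)
  refine ⟨a, ht₀a, hfa, fun t ht hta => ?_, fun t hta => ?_⟩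
  · rcases le_total t t₀ with h | h
    · exact hf0 ▸ hmono ⟨le_rfl, ht₀.le⟩ ⟨ht.le, h⟩ ht
    · exact hfa ▸ hanti h hat₀ hta
  · exact hfa ▸ hanti hat₀ (hat₀.trans hta.le) hta

theorem integrableOn_Ioo_of_abs_le_mul_rpow {b a K r : ℝ} (hr : -1 < r) (hba : b ≤ a)
    (hf : AEStronglyMeasurable f (volume.restrict (Ioo b a)))
    (hbound : ∀ t ∈ Ioo b a, |f t| ≤ K * (a - t) ^ r) : IntegrableOn f (Ioo b a) := by
  have hrpow : IntegrableOn (fun t => (a - t) ^ r) (Ioo b a) := by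
    rw [← intervalIntegrable_iff_integrableOn_Ioo_of_le hba]
    simpa using
      ((intervalIntegral.intervalIntegrable_rpow' hr (a := 0) (b := a - b)).comp_sub_left a).symm
  refine (hrpow.const_mul K).mono' hf ?_
  rw [ae_restrict_iff' measurableSet_Ioo]
  exact ae_of_all _ hbound

end Calculus

section Ifun

variable (m : ℕ)

theorem hasDerivAt_Ifun (t : ℝ) : HasDerivAt (Ifun m) (sinh t ^ m) t :=
  have hc : Continuous fun r => sinh r ^ m := continuous_sinh.pow m
  intervalIntegral.integral_hasDerivAt_right (hc.intervalIntegrable _ _)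
    hc.aestronglyMeasurable.stronglyMeasurableAtFilter hc.continuousAt

theorem continuous_Ifun : Continuous (Ifun m) :=
  continuous_iff_continuousAt.2 fun t => (hasDerivAt_Ifun m t).continuousAt

@[simp]
theorem Ifun_zero : Ifun m 0 = 0 := by simp [Ifun]

theorem monotoneOn_Ifun : MonotoneOn (Ifun m) (Ici 0) :=
  monotoneOn_of_hasDerivWithinAt_nonneg (convex_Ici 0) (continuous_Ifun m).continuousOn
    (fun t _ => (hasDerivAt_Ifun m t).hasDerivWithinAt)
    (fun _ ht => pow_nonneg (sinh_nonneg_iff.2 (interior_subset ht)) m)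

variable {m}

theorem Ifun_nonneg {t : ℝ} (ht : 0 ≤ t) : 0 ≤ Ifun m t :=
  Ifun_zero m ▸ monotoneOn_Ifun m self_mem_Ici ht ht

theorem Ifun_le_mul {t : ℝ} (ht : 0 ≤ t) : Ifun m t ≤ t * sinh t ^ m := by
  have h : Ifun m t ≤ ∫ _ in (0 : ℝ)..t, sinh t ^ m :=
    intervalIntegral.integral_mono_on ht ((continuous_sinh.pow m).intervalIntegrable _ _)
      intervalIntegrable_const fun r hr =>
        pow_le_pow_left₀ (sinh_nonneg_iff.2 hr.1) (sinh_le_sinh.2 hr.2) m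
  simpa using h

end Ifun

noncomputable def Gfun (n : ℕ) (H t : ℝ) : ℝ := ((n : ℝ) - 1) * cosh t - n * H * sinh t

section Gfun

variable {n : ℕ} {H : ℝ}

theorem hasDerivAt_Gfun (t : ℝ) :
    HasDerivAt (Gfun n H) (((n : ℝ) - 1) * sinh t - n * H * cosh t) t :=
  ((hasDerivAt_cosh t).const_mul _).sub ((hasDerivAt_sinh t).const_mul _)

theorem Gfun_deriv_le (hn : 1 ≤ n) (hH : (n : ℝ) - 1 ≤ n * H) (t : ℝ) :
    ((n : ℝ) - 1) * sinh t - n * H * cosh t ≤ -(n * H - ((n : ℝ) - 1)) := by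
  have hn' : (0 : ℝ) ≤ n - 1 := sub_nonneg.2 (by exact_mod_cast hn)
  have hsinh : ((n : ℝ) - 1) * sinh t ≤ ((n : ℝ) - 1) * cosh t :=
    mul_le_mul_of_nonneg_left (sinh_lt_cosh t).le hn'
  nlinarith [one_le_cosh t]

theorem strictAnti_Gfun (hn : 1 ≤ n) (hH : (n : ℝ) - 1 < n * H) : StrictAnti (Gfun n H) :=
  strictAnti_of_hasDerivAt_neg hasDerivAt_Gfun fun t =>
    (Gfun_deriv_le hn hH.le t).trans_lt (by linarith)

theorem exists_Gfun_eq_zero (hn : 2 ≤ n) (hH : (n : ℝ) - 1 < n * H) :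
    ∃ t₀, 0 < t₀ ∧ Gfun n H t₀ = 0 := by
  have hbot : Tendsto (Gfun n H) atTop atBot :=
    tendsto_atBot_of_hasDerivAt_le_neg (b := 0) (sub_pos.2 hH) hasDerivAt_Gfun
      fun t _ => Gfun_deriv_le (by omega) hH.le t
  have hG0 : 0 < Gfun n H 0 := by
    simp only [Gfun, cosh_zero, sinh_zero]
    have : (2 : ℝ) ≤ n := by exact_mod_cast hn
    linarith
  obtain ⟨t₀, ht₀, hGt₀⟩ := intermediate_value_Ici' (continuous_iff_continuousAt.2
    fun t => (hasDerivAt_Gfun t).continuousAt).continuousOn hbot hG0.le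
  exact ⟨t₀, lt_of_le_of_ne ht₀ (by rintro rfl; linarith), hGt₀⟩

end Gfun

section Mfun

variable {n : ℕ} {H : ℝ}

theorem hasDerivAt_Mfun (hn : 2 ≤ n) (d t : ℝ) :
    HasDerivAt (Mfun n H d) (sinh t ^ (n - 2) * Gfun n H t) t := by
  obtain ⟨k, rfl⟩ : ∃ k, n = k + 2 := ⟨n - 2, by omega⟩
  refine ((((hasDerivAt_sinh t).fun_pow (k + 1)).sub
    ((hasDerivAt_Ifun (k + 1) t).const_mul (((k + 2 : ℕ) : ℝ) * H))).sub_const d).congr_deriv ?_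
  simp only [Gfun, Nat.add_sub_cancel]
  push_cast
  ring

theorem continuous_Mfun (d : ℝ) : Continuous (Mfun n H d) :=
  ((continuous_sinh.pow _).sub (continuous_const.mul (continuous_Ifun _))).sub continuous_const

theorem continuous_Pfun (d : ℝ) : Continuous (Pfun n H d) :=
  ((continuous_sinh.pow _).add (continuous_const.mul (continuous_Ifun _))).add continuous_const

theorem Mfun_zero (hn : 2 ≤ n) : Mfun n H 0 0 = 0 := by
  simp [Mfun, show n - 1 ≠ 0 by omega]

theorem sinh_pow_mul_Gfun_le (hn : 1 ≤ n) (hH : (n : ℝ) - 1 < n * H) {b t : ℝ} (hb : 0 ≤ b)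
    (hGb : Gfun n H b ≤ 0) (hbt : b ≤ t) :
    sinh t ^ (n - 2) * Gfun n H t ≤ sinh b ^ (n - 2) * Gfun n H b := by
  have hG : Gfun n H t ≤ Gfun n H b := (strictAnti_Gfun hn hH).antitone hbt
  have hsinh : sinh b ^ (n - 2) ≤ sinh t ^ (n - 2) :=
    pow_le_pow_left₀ (sinh_nonneg_iff.2 hb) (sinh_le_sinh.2 hbt) _
  calc sinh t ^ (n - 2) * Gfun n H t ≤ sinh b ^ (n - 2) * Gfun n H t :=
        mul_le_mul_of_nonpos_right hsinh (hG.trans hGb)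
    _ ≤ sinh b ^ (n - 2) * Gfun n H b :=
        mul_le_mul_of_nonneg_left hG (pow_nonneg (sinh_nonneg_iff.2 hb) _)

theorem exists_Mfun_root (hn : 2 ≤ n) (hH : (n : ℝ) - 1 < n * H) :
    ∃ t₀ a, 0 < t₀ ∧ t₀ < a ∧ Gfun n H t₀ = 0 ∧ Mfun n H 0 a = 0 ∧
      (∀ t, 0 < t → t < a → 0 < Mfun n H 0 t) ∧ ∀ t, a < t → Mfun n H 0 t < 0 := by
  obtain ⟨t₀, ht₀, hGt₀⟩ := exists_Gfun_eq_zero hn hH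
  have hG := strictAnti_Gfun (by omega) hH
  have hsinh_pos : ∀ t, 0 < t → 0 < sinh t ^ (n - 2) := fun t ht => pow_pos (sinh_pos_iff.2 ht) _
  have hGb : Gfun n H (t₀ + 1) < 0 := hGt₀ ▸ hG (lt_add_one t₀)
  have hbot : Tendsto (Mfun n H 0) atTop atBot :=
    tendsto_atBot_of_hasDerivAt_le_neg (b := t₀ + 1)
      (neg_pos.2 (mul_neg_of_pos_of_neg (hsinh_pos (t₀ + 1) (by linarith)) hGb))
      (hasDerivAt_Mfun hn 0) fun t ht => by
        rw [neg_neg]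
        exact sinh_pow_mul_Gfun_le (by omega) hH (by linarith) hGb.le ht
  obtain ⟨a, ht₀a, hMa, hpos, hneg⟩ := exists_pos_root_of_hasDerivAt (hasDerivAt_Mfun hn 0)
    (Mfun_zero hn) ht₀ (fun t ht => mul_pos (hsinh_pos t ht.1) (hGt₀ ▸ hG ht.2))
    (fun t ht => mul_neg_of_pos_of_neg (hsinh_pos t (ht₀.trans ht)) (hGt₀ ▸ hG ht)) hbot
  exact ⟨t₀, a, ht₀, ht₀a, hGt₀, hMa, hpos, hneg⟩

end Mfun

section Qfun

variable {n : ℕ} {H : ℝ}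

theorem measurable_Qfun (d : ℝ) : Measurable (Qfun n H d) :=
  ((continuous_const.mul (continuous_Ifun _)).add continuous_const).measurable.div
    ((continuous_Mfun d).mul (continuous_Pfun d)).sqrt.measurable

theorem continuousAt_Qfun {d t : ℝ} (h : 0 < Mfun n H d t * Pfun n H d t) :
    ContinuousAt (Qfun n H d) t :=
  ((continuous_const.mul (continuous_Ifun _)).add continuous_const).continuousAt.div
    ((continuous_Mfun d).mul (continuous_Pfun d)).sqrt.continuousAt (Real.sqrt_pos.2 h).ne'

theorem sinh_pow_le_Pfun (hH : 0 ≤ H) {t : ℝ} (ht : 0 ≤ t) : sinh t ^ (n - 1) ≤ Pfun n H 0 t := by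
  have := mul_nonneg (mul_nonneg n.cast_nonneg hH) (Ifun_nonneg (m := n - 1) ht)
  simp only [Pfun, add_zero]
  linarith

theorem abs_Qfun_le (hH : 0 ≤ H) {t μ p : ℝ} (ht : 0 ≤ t) (hμ : 0 < μ) (hp : 0 < p)
    (hM : μ ≤ Mfun n H 0 t) (hP : p ≤ Pfun n H 0 t) :
    |Qfun n H 0 t| ≤ n * H * Ifun (n - 1) t / √(μ * p) := by
  have hI : 0 ≤ n * H * Ifun (n - 1) t :=
    mul_nonneg (mul_nonneg n.cast_nonneg hH) (Ifun_nonneg ht)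
  rw [Qfun, add_zero, abs_of_nonneg (div_nonneg hI (Real.sqrt_nonneg _))]
  exact div_le_div_of_nonneg_left hI (Real.sqrt_pos.2 (mul_pos hμ hp))
    (Real.sqrt_le_sqrt (mul_le_mul hM hP hp.le (hμ.le.trans hM)))

theorem abs_Qfun_le_one (hH : 0 ≤ H) {t : ℝ} (ht : 0 < t) (hHt : n * H * t ≤ 1 / 2) :
    |Qfun n H 0 t| ≤ 1 := by
  set S := sinh t ^ (n - 1)
  have hS : 0 < S := pow_pos (sinh_pos_iff.2 ht) _
  have hI : n * H * Ifun (n - 1) t ≤ S / 2 := calc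
    n * H * Ifun (n - 1) t ≤ n * H * (t * S) :=
        mul_le_mul_of_nonneg_left (Ifun_le_mul ht.le) (mul_nonneg n.cast_nonneg hH)
    _ = n * H * t * S := by ring
    _ ≤ 1 / 2 * S := mul_le_mul_of_nonneg_right hHt hS.le
    _ = S / 2 := by ring
  have hM : S / 2 ≤ Mfun n H 0 t := by
    simp only [Mfun, sub_zero]
    linarith
  refine (abs_Qfun_le hH ht.le (half_pos hS) hS hM (sinh_pow_le_Pfun hH ht.le)).trans ?_
  rw [div_le_one (Real.sqrt_pos.2 (by positivity))]
  exact hI.trans (Real.le_sqrt_of_sq_le (by nlinarith))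

theorem integrableOn_Qfun_Ioo (hn : 2 ≤ n) (hH : (n : ℝ) - 1 < n * H) {b a : ℝ} (hb : 0 < b)
    (hGb : Gfun n H b < 0) (hba : b ≤ a) (hMa : Mfun n H 0 a = 0) :
    IntegrableOn (Qfun n H 0) (Ioo b a) := by
  have hH0 : 0 ≤ H := by
    have : (2 : ℝ) ≤ n := by exact_mod_cast hn
    nlinarith
  set δ := -(sinh b ^ (n - 2) * Gfun n H b)
  set p := sinh b ^ (n - 1)
  have hδ : 0 < δ := neg_pos.2 (mul_neg_of_pos_of_neg (pow_pos (sinh_pos_iff.2 hb) _) hGb)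
  have hp : 0 < p := pow_pos (sinh_pos_iff.2 hb) _
  refine integrableOn_Ioo_of_abs_le_mul_rpow (K := n * H * Ifun (n - 1) a / √(δ * p))
    (by norm_num : (-1 : ℝ) < -(1 / 2)) hba (measurable_Qfun 0).aestronglyMeasurable
    fun t ⟨hbt, hta⟩ => ?_
  have ht : 0 ≤ t := (hb.trans hbt).le
  have hat : 0 < a - t := sub_pos.2 hta
  have hM : δ * (a - t) ≤ Mfun n H 0 t := by
    have := sub_le_mul_sub_of_hasDerivAt_le (hasDerivAt_Mfun hn 0)
      (fun s hs => sinh_pow_mul_Gfun_le (by omega) hH hb.le hGb.le hs) hbt.le hta.le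
    rw [hMa] at this
    linarith
  have hP : p ≤ Pfun n H 0 t :=
    (pow_le_pow_left₀ (sinh_nonneg_iff.2 hb.le) (sinh_le_sinh.2 hbt.le) _).trans
      (sinh_pow_le_Pfun hH0 ht)
  have hIa : Ifun (n - 1) t ≤ Ifun (n - 1) a := monotoneOn_Ifun _ ht (ht.trans hta.le) hta.le
  calc |Qfun n H 0 t| ≤ n * H * Ifun (n - 1) t / √(δ * (a - t) * p) :=
        abs_Qfun_le hH0 ht (mul_pos hδ hat) hp hM hP
    _ ≤ n * H * Ifun (n - 1) a / √(δ * (a - t) * p) :=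
        div_le_div_of_nonneg_right (mul_le_mul_of_nonneg_left hIa (by positivity))
          (Real.sqrt_nonneg _)
    _ = n * H * Ifun (n - 1) a / √(δ * p) * (a - t) ^ (-(1 / 2) : ℝ) := by
        rw [show δ * (a - t) * p = δ * p * (a - t) by ring, Real.sqrt_mul (by positivity),
          Real.rpow_neg hat.le, ← Real.sqrt_eq_rpow]
        field_simp

theorem integrableOn_Qfun (hn : 2 ≤ n) (hH : (n : ℝ) - 1 < n * H) {t₀ a : ℝ} (ht₀ : 0 < t₀)
    (ht₀a : t₀ < a) (hGt₀ : Gfun n H t₀ = 0) (hMa : Mfun n H 0 a = 0)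
    (hpos : ∀ t, 0 < t → t < a → 0 < Mfun n H 0 t) : IntegrableOn (Qfun n H 0) (Ioo 0 a) := by
  have hc : 0 < n * H := by
    have : (2 : ℝ) ≤ n := by exact_mod_cast hn
    linarith
  have hH0 : 0 < H := pos_of_mul_pos_right hc n.cast_nonneg
  obtain ⟨b, ht₀b, hba⟩ := exists_between ht₀a
  set ε := min b (1 / (2 * (n * H)))
  have hε : 0 < ε := lt_min (by linarith) (by positivity)
  have hεb : ε ≤ b := min_le_left _ _
  have hnear0 : IntegrableOn (Qfun n H 0) (Ioc 0 ε) := by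
    refine Measure.integrableOn_of_bounded (M := 1) measure_Ioc_lt_top.ne
      (measurable_Qfun 0).aestronglyMeasurable ?_
    refine (ae_restrict_iff' measurableSet_Ioc).2 (ae_of_all _ fun t ⟨ht, htε⟩ => ?_)
    rw [Real.norm_eq_abs]
    refine abs_Qfun_le_one hH0.le ht ?_
    calc n * H * t ≤ n * H * (1 / (2 * (n * H))) :=
          mul_le_mul_of_nonneg_left (htε.trans (min_le_right _ _)) hc.le
      _ = 1 / 2 := by field_simp [hc.ne']
  have hmid : IntegrableOn (Qfun n H 0) (Icc ε b) := by
    refine ContinuousOn.integrableOn_compact isCompact_Icc fun t ⟨hεt, htb⟩ => ?_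
    have ht : 0 < t := hε.trans_le hεt
    have hP : 0 < Pfun n H 0 t :=
      (pow_pos (sinh_pos_iff.2 ht) _).trans_le (sinh_pow_le_Pfun hH0.le ht.le)
    exact (continuousAt_Qfun (mul_pos (hpos t ht (by linarith)) hP)).continuousWithinAt
  have hnear_a : IntegrableOn (Qfun n H 0) (Ioo b a) :=
    integrableOn_Qfun_Ioo hn hH (by linarith)
      (hGt₀ ▸ strictAnti_Gfun (by omega) hH (by linarith)) (by linarith) hMa
  refine ((hnear0.union hmid).union hnear_a).mono_set fun t ⟨ht, hta⟩ => ?_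
  rcases le_or_gt t ε with htε | hεt
  · exact Or.inl (Or.inl ⟨ht, htε⟩)
  rcases le_or_gt t b with htb | hbt
  · exact Or.inl (Or.inr ⟨hεt.le, htb⟩)
  · exact Or.inr ⟨hbt, hta⟩

end Qfun

/-- Let `n ≥ 2` and `H > (n-1)/n`. Then there is a unique `a > 0` with `M_{H,0}(a) = 0`;
moreover `M_{H,0} > 0` on `(0,a)`, `M_{H,0} < 0` on `(a,∞)`, and `Q_{H,0}` is integrable
on `(0, a)`. -/
theorem stmt14 (n : ℕ) (hn : 2 ≤ n) (H : ℝ) (hH : ((n : ℝ) - 1) / n < H) :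
    ∃ a : ℝ, 0 < a ∧ Mfun n H 0 a = 0 ∧
      (∀ t, 0 < t → t < a → 0 < Mfun n H 0 t) ∧
      (∀ t, a < t → Mfun n H 0 t < 0) ∧
      (∀ a', 0 < a' → Mfun n H 0 a' = 0 → a' = a) ∧
      MeasureTheory.IntegrableOn (Qfun n H 0) (Set.Ioo 0 a) := by
  have hH' : (n : ℝ) - 1 < n * H := by
    rwa [div_lt_iff₀ (Nat.cast_pos.2 (by omega)), mul_comm] at hH
  obtain ⟨t₀, a, ht₀, ht₀a, hGt₀, hMa, hpos, hneg⟩ := exists_Mfun_root hn hH'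
  refine ⟨a, ht₀.trans ht₀a, hMa, hpos, hneg, fun a' ha' hMa' => ?_,
    integrableOn_Qfun hn hH' ht₀ ht₀a hGt₀ hMa hpos⟩
  rcases lt_trichotomy a' a with h | h | h
  · exact absurd hMa' (hpos a' ha' h).ne'
  · exact h
  · exact absurd hMa' (hneg a' h).ne
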